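/- arXiv:2003.07121 — 8 statements merged into one kernel-verified Lean document; each statement's English description precedes it below -/
import Mathlib

section
/- Let N ≥ 2, let a ∈ ℝ, and let L_p and L_c be real symmetric N×N matrices with L_p·𝟏 = 0 and L_c·𝟏 = 0 (𝟏 the all-ones vector). Suppose there are reals λpmin ≤ λpmax and 0 < λcmin ≤ λcmax such that for every v ∈ ℝ^N orthogonal to 𝟏: λpmin·‖v‖² ≤ vᵀL_p v ≤ λpmax·‖v‖² and λcmin·‖v‖² ≤ vᵀL_c v ≤ λcmax·‖v‖². Set γc = λcmax/λcmin and Δp = λpmax − λpmin. If λpmin > a − 1 and (γc − 1)(1 − a + λpmin) < γc(2 − Δp), then there exists k ≥ 0 with (−1 − a + λpmax)/λcmin < k < (1 − a + λpmin)/λcmax, and for any such k the matrix powers (a·I_N − L_p + k·L_c)^t composed with the projection I_N − (1/N)·𝟏𝟏ᵀ converge to the zero matrix as t → ∞. -/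
open Matrix Finset Filter Topology

/-!
On the subspace `𝟏ᗮ` of zero-sum vectors, which the symmetric matrix `A = a I - L_p + k L_c`
leaves invariant because `A 𝟏 = a 𝟏`, the Rayleigh bounds give `|vᵀ A v| ≤ ρ ‖v‖²` with
`ρ = max (a - λpmin + k λcmax, λpmax - a - k λcmin, 0)`, and the window for `k` is exactly the
condition `ρ < 1`. Polarization turns the quadratic-form bound into the contraction
`‖A v‖² ≤ ρ / (2 - ρ) ‖v‖²` on `𝟏ᗮ`, so `A^t` sends every column of the centering projection,
a zero-sum vector, to `0`. Condition C1 is the cross-multiplied form of the window being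
nonempty.
-/

namespace Matrix

variable {n : Type*} [Fintype n]

theorem IsSymm.dotProduct_mulVec_comm {R : Type*} [CommSemiring R] {A : Matrix n n R}
    (hA : A.IsSymm) (u v : n → R) : u ⬝ᵥ (A *ᵥ v) = (A *ᵥ u) ⬝ᵥ v := by
  rw [dotProduct_mulVec, ← vecMul_transpose, hA.eq]

theorem IsSymm.sum_mulVec_eq_zero {R : Type*} [CommRing R] {A : Matrix n n R} (hA : A.IsSymm)
    {μ : R} (hA1 : A *ᵥ (fun _ => 1) = μ • fun _ => 1) {v : n → R} (hv : ∑ i, v i = 0) :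
    ∑ i, (A *ᵥ v) i = 0 := by
  have h : ∀ w : n → R, ∑ i, w i = (fun _ => 1) ⬝ᵥ w := fun w => by simp [dotProduct]
  rw [h, hA.dotProduct_mulVec_comm, hA1, smul_dotProduct, ← h, hv, smul_zero]

def sumZero (n : Type*) [Fintype n] : Submodule ℝ (n → ℝ) where
  carrier := {v | ∑ i, v i = 0}
  add_mem' hu hv := by simp_all [sum_add_distrib]
  zero_mem' := by simp
  smul_mem' c v hv := by simp_all [← mul_sum]

theorem mem_sumZero {v : n → ℝ} : v ∈ sumZero n ↔ ∑ i, v i = 0 := Iff.rfl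

theorem IsSymm.dotProduct_mulVec_self_le_of_abs_le {A : Matrix n n ℝ} (hA : A.IsSymm)
    {W : Submodule ℝ (n → ℝ)} (hW : ∀ v ∈ W, A *ᵥ v ∈ W) {ρ : ℝ}
    (hρ : ∀ v ∈ W, |v ⬝ᵥ (A *ᵥ v)| ≤ ρ * (v ⬝ᵥ v)) {v : n → ℝ} (hv : v ∈ W) :
    (2 - ρ) * ((A *ᵥ v) ⬝ᵥ (A *ᵥ v)) ≤ ρ * (v ⬝ᵥ v) := by
  -- Apply the bound to `u ± v` with `u = A v`: the cross terms `v ⬝ᵥ A u = u ⬝ᵥ u`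
  -- add up to `4 ‖u‖²`.
  set u := A *ᵥ v
  have hu : u ∈ W := hW v hv
  have hvu : v ⬝ᵥ (A *ᵥ u) = u ⬝ᵥ u := hA.dotProduct_mulVec_comm v u
  have hplus := (abs_le.mp (hρ (u + v) (W.add_mem hu hv))).2
  have hminus := (abs_le.mp (hρ (u - v) (W.sub_mem hu hv))).1
  simp only [mulVec_add, mulVec_sub, dotProduct_add, dotProduct_sub, add_dotProduct,
    sub_dotProduct, hvu, dotProduct_comm v u] at hplus hminus
  nlinarith

theorem tendsto_zero_of_tendsto_dotProduct_self {ι : Type*} {l : Filter ι} {x : ι → n → ℝ}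
    (h : Tendsto (fun t => x t ⬝ᵥ x t) l (𝓝 0)) : Tendsto x l (𝓝 0) := by
  refine tendsto_pi_nhds.2 fun i => squeeze_zero_norm (fun t => ?_) (by simpa using h.sqrt)
  refine Real.abs_le_sqrt ?_
  simpa [dotProduct, sq] using
    single_le_sum (f := fun j => x t j * x t j) (fun j _ => mul_self_nonneg _) (mem_univ i)

theorem tendsto_pow_mulVec_of_dotProduct_mulVec_self_le [DecidableEq n] {A : Matrix n n ℝ}
    {W : Submodule ℝ (n → ℝ)} (hW : ∀ v ∈ W, A *ᵥ v ∈ W) {c : ℝ} (hc0 : 0 ≤ c) (hc1 : c < 1)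
    (hA : ∀ v ∈ W, (A *ᵥ v) ⬝ᵥ (A *ᵥ v) ≤ c * (v ⬝ᵥ v)) {v : n → ℝ} (hv : v ∈ W) :
    Tendsto (fun t : ℕ => A ^ t *ᵥ v) atTop (𝓝 0) := by
  have hiter : ∀ t : ℕ, A ^ t *ᵥ v ∈ W ∧ (A ^ t *ᵥ v) ⬝ᵥ (A ^ t *ᵥ v) ≤ c ^ t * (v ⬝ᵥ v) := by
    intro t
    induction t with
    | zero => simpa using hv
    | succ t ih =>
      rw [pow_succ', ← mulVec_mulVec]
      refine ⟨hW _ ih.1, (hA _ ih.1).trans ?_⟩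
      rw [pow_succ', mul_assoc]
      exact mul_le_mul_of_nonneg_left ih.2 hc0
  refine tendsto_zero_of_tendsto_dotProduct_self
    (squeeze_zero (fun t => dotProduct_self_star_nonneg _) (fun t => (hiter t).2) ?_)
  simpa using (tendsto_pow_atTop_nhds_zero_of_lt_one hc0 hc1).mul_const (v ⬝ᵥ v)

theorem IsSymm.tendsto_pow_mulVec_of_abs_dotProduct_mulVec_le [DecidableEq n] {A : Matrix n n ℝ}
    (hA : A.IsSymm) {W : Submodule ℝ (n → ℝ)} (hW : ∀ v ∈ W, A *ᵥ v ∈ W) {ρ : ℝ} (hρ0 : 0 ≤ ρ)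
    (hρ1 : ρ < 1) (hρ : ∀ v ∈ W, |v ⬝ᵥ (A *ᵥ v)| ≤ ρ * (v ⬝ᵥ v)) {v : n → ℝ} (hv : v ∈ W) :
    Tendsto (fun t : ℕ => A ^ t *ᵥ v) atTop (𝓝 0) := by
  have h2ρ : 0 < 2 - ρ := by linarith
  refine tendsto_pow_mulVec_of_dotProduct_mulVec_self_le hW (c := ρ / (2 - ρ))
    (div_nonneg hρ0 h2ρ.le) ((div_lt_one h2ρ).2 (by linarith)) (fun w hw => ?_) hv
  rw [div_mul_eq_mul_div, le_div_iff₀' h2ρ]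
  exact hA.dotProduct_mulVec_self_le_of_abs_le hW hρ hw

theorem tendsto_mul_of_tendsto_mulVec_col {m ι : Type*} {l : Filter ι} {M : ι → Matrix m n ℝ}
    {P : Matrix n n ℝ} (h : ∀ j, Tendsto (fun t => M t *ᵥ (fun i => P i j)) l (𝓝 0)) :
    Tendsto (fun t => M t * P) l (𝓝 0) :=
  tendsto_pi_nhds.2 fun i => tendsto_pi_nhds.2 fun j => (tendsto_pi_nhds.1 (h j) i :)

theorem col_one_sub_inv_smul_ones_mem_sumZero {N : ℕ} (j : Fin N) :
    (fun i => ((1 - (N : ℝ)⁻¹ • Matrix.of fun _ _ => (1 : ℝ) : Matrix (Fin N) (Fin N) ℝ)) i j)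
      ∈ sumZero (Fin N) := by
  have hN : (N : ℝ) ≠ 0 := Nat.cast_ne_zero.2 j.pos.ne'
  simp [mem_sumZero, sum_sub_distrib, one_apply, hN]

theorem abs_dotProduct_smul_one_sub_add_smul_mulVec_le [DecidableEq n] {a k : ℝ} (hk : 0 ≤ k)
    {Lp Lc : Matrix n n ℝ} {lpmin lpmax lcmin lcmax : ℝ} {v : n → ℝ}
    (hp : lpmin * (v ⬝ᵥ v) ≤ v ⬝ᵥ (Lp *ᵥ v) ∧ v ⬝ᵥ (Lp *ᵥ v) ≤ lpmax * (v ⬝ᵥ v))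
    (hc : lcmin * (v ⬝ᵥ v) ≤ v ⬝ᵥ (Lc *ᵥ v) ∧ v ⬝ᵥ (Lc *ᵥ v) ≤ lcmax * (v ⬝ᵥ v)) :
    |v ⬝ᵥ ((a • 1 - Lp + k • Lc) *ᵥ v)| ≤
      max (max (a - lpmin + k * lcmax) (lpmax - a - k * lcmin)) 0 * (v ⬝ᵥ v) := by
  have hvv : 0 ≤ v ⬝ᵥ v := dotProduct_self_star_nonneg v
  have hk1 := mul_le_mul_of_nonneg_left hc.1 hk
  have hk2 := mul_le_mul_of_nonneg_left hc.2 hk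
  have hx := mul_le_mul_of_nonneg_right
    ((le_max_left (a - lpmin + k * lcmax) (lpmax - a - k * lcmin)).trans (le_max_left _ 0)) hvv
  have hy := mul_le_mul_of_nonneg_right
    ((le_max_right (a - lpmin + k * lcmax) (lpmax - a - k * lcmin)).trans (le_max_left _ 0)) hvv
  simp only [add_mulVec, sub_mulVec, smul_mulVec, one_mulVec, dotProduct_add, dotProduct_sub,
    dotProduct_smul, smul_eq_mul]
  rw [abs_le]
  constructor <;> nlinarith

end Matrix

theorem stmt_2_general (N : ℕ) (a : ℝ)
    (Lp Lc : Matrix (Fin N) (Fin N) ℝ)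
    (hLpsymm : Lp.IsSymm) (hLcsymm : Lc.IsSymm)
    (hLp1 : Lp *ᵥ (fun _ => (1 : ℝ)) = 0) (hLc1 : Lc *ᵥ (fun _ => (1 : ℝ)) = 0)
    (lpmin lpmax lcmin lcmax : ℝ)
    (hc0 : 0 < lcmin) (hc : lcmin ≤ lcmax)
    (hqp : ∀ v : Fin N → ℝ, (∑ i, v i) = 0 →
      lpmin * (v ⬝ᵥ v) ≤ v ⬝ᵥ (Lp *ᵥ v) ∧ v ⬝ᵥ (Lp *ᵥ v) ≤ lpmax * (v ⬝ᵥ v))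
    (hqc : ∀ v : Fin N → ℝ, (∑ i, v i) = 0 →
      lcmin * (v ⬝ᵥ v) ≤ v ⬝ᵥ (Lc *ᵥ v) ∧ v ⬝ᵥ (Lc *ᵥ v) ≤ lcmax * (v ⬝ᵥ v))
    (γc Δp : ℝ) (hγ : γc = lcmax / lcmin) (hΔ : Δp = lpmax - lpmin)
    (hC1a : lpmin > a - 1) (hC1b : (γc - 1) * (1 - a + lpmin) < γc * (2 - Δp)) :
    (∃ k : ℝ, 0 ≤ k ∧ (-1 - a + lpmax) / lcmin < k ∧ k < (1 - a + lpmin) / lcmax) ∧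
    ∀ k : ℝ, 0 ≤ k → (-1 - a + lpmax) / lcmin < k → k < (1 - a + lpmin) / lcmax →
      Filter.Tendsto
        (fun t : ℕ => (a • (1 : Matrix (Fin N) (Fin N) ℝ) - Lp + k • Lc) ^ t *
          ((1 : Matrix (Fin N) (Fin N) ℝ) - (N : ℝ)⁻¹ • Matrix.of fun _ _ => (1 : ℝ)))
        Filter.atTop (nhds 0) := by
  have hcmax : 0 < lcmax := hc0.trans_le hc
  have hinterval : (-1 - a + lpmax) / lcmin < (1 - a + lpmin) / lcmax := by
    rw [div_lt_div_iff₀ hc0 hcmax]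
    subst hγ hΔ
    rw [← mul_lt_mul_iff_of_pos_right hc0] at hC1b
    field_simp at hC1b
    linarith
  refine ⟨?_, fun k hk0 hkL hkU => ?_⟩
  · obtain ⟨k, hk, hkU⟩ := exists_between (max_lt hinterval (div_pos (by linarith) hcmax))
    exact ⟨k, (le_max_right _ _).trans hk.le, (le_max_left _ _).trans_lt hk, hkU⟩
  set A := a • (1 : Matrix (Fin N) (Fin N) ℝ) - Lp + k • Lc
  have hA : A.IsSymm := by
    simp only [A, IsSymm, transpose_add, transpose_sub, transpose_smul, transpose_one,
      hLpsymm.eq, hLcsymm.eq]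
  have hA1 : A *ᵥ (fun _ => (1 : ℝ)) = a • fun _ => (1 : ℝ) := by
    simp [A, add_mulVec, sub_mulVec, smul_mulVec, hLp1, hLc1]
  have hρ1 : max (max (a - lpmin + k * lcmax) (lpmax - a - k * lcmin)) 0 < 1 := by
    have := (lt_div_iff₀ hcmax).1 hkU
    have := (div_lt_iff₀ hc0).1 hkL
    exact max_lt (max_lt (by linarith) (by linarith)) one_pos
  refine tendsto_mul_of_tendsto_mulVec_col fun j =>
    hA.tendsto_pow_mulVec_of_abs_dotProduct_mulVec_le (W := sumZero (Fin N))
      (fun v hv => hA.sum_mulVec_eq_zero hA1 hv) (le_max_right _ _) hρ1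
      (fun v hv => abs_dotProduct_smul_one_sub_add_smul_mulVec_le hk0 (hqp v hv) (hqc v hv))
      (col_one_sub_inv_smul_ones_mem_sumZero j)

theorem stmt_2 (N : ℕ) (hN : 2 ≤ N) (a : ℝ)
    (Lp Lc : Matrix (Fin N) (Fin N) ℝ)
    (hLpsymm : Lp.IsSymm) (hLcsymm : Lc.IsSymm)
    (hLp1 : Lp *ᵥ (fun _ => (1 : ℝ)) = 0) (hLc1 : Lc *ᵥ (fun _ => (1 : ℝ)) = 0)
    (lpmin lpmax lcmin lcmax : ℝ) (hp : lpmin ≤ lpmax)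
    (hc0 : 0 < lcmin) (hc : lcmin ≤ lcmax)
    (hqp : ∀ v : Fin N → ℝ, (∑ i, v i) = 0 →
      lpmin * (v ⬝ᵥ v) ≤ v ⬝ᵥ (Lp *ᵥ v) ∧ v ⬝ᵥ (Lp *ᵥ v) ≤ lpmax * (v ⬝ᵥ v))
    (hqc : ∀ v : Fin N → ℝ, (∑ i, v i) = 0 →
      lcmin * (v ⬝ᵥ v) ≤ v ⬝ᵥ (Lc *ᵥ v) ∧ v ⬝ᵥ (Lc *ᵥ v) ≤ lcmax * (v ⬝ᵥ v))
    (γc Δp : ℝ) (hγ : γc = lcmax / lcmin) (hΔ : Δp = lpmax - lpmin)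
    (hC1a : lpmin > a - 1) (hC1b : (γc - 1) * (1 - a + lpmin) < γc * (2 - Δp)) :
    (∃ k : ℝ, 0 ≤ k ∧ (-1 - a + lpmax) / lcmin < k ∧ k < (1 - a + lpmin) / lcmax) ∧
    ∀ k : ℝ, 0 ≤ k → (-1 - a + lpmax) / lcmin < k → k < (1 - a + lpmin) / lcmax →
      Filter.Tendsto
        (fun t : ℕ => (a • (1 : Matrix (Fin N) (Fin N) ℝ) - Lp + k • Lc) ^ t *
          ((1 : Matrix (Fin N) (Fin N) ℝ) - (N : ℝ)⁻¹ • Matrix.of fun _ _ => (1 : ℝ)))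
        Filter.atTop (nhds 0) :=
  stmt_2_general N a Lp Lc hLpsymm hLcsymm hLp1 hLc1 lpmin lpmax lcmin lcmax hc0 hc hqp hqc γc Δp hγ
    hΔ hC1a hC1b
end

section
/- Let N ≥ 2, let a ∈ ℝ, and let L_p and L_c be real symmetric N×N matrices with L_p·𝟏 = 0 and L_c·𝟏 = 0 (𝟏 the all-ones vector). Suppose there are reals λpmin ≤ λpmax and 0 < λcmin ≤ λcmax such that for every v ∈ ℝ^N orthogonal to 𝟏: λpmin·‖v‖² ≤ vᵀL_p v ≤ λpmax·‖v‖² and λcmin·‖v‖² ≤ vᵀL_c v ≤ λcmax·‖v‖². Set γc = λcmax/λcmin and Δp = λpmax − λpmin. If λpmax < 1 + a and (γc − 1)(−1 − a + λpmax) > γc(Δp − 2), then there exists k < 0 with (−1 − a + λpmax)/λcmax < k < (1 − a + λpmin)/λcmin, and for any such k the matrix powers (a·I_N − L_p + k·L_c)^t composed with the projection I_N − (1/N)·𝟏𝟏ᵀ converge to the zero matrix as t → ∞. -/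
/-!
The closed-loop matrix `M = a I - Lp + k Lc` is symmetric and commutes with the centering
projection `P = I - 𝟏𝟏ᵀ / N`, because both Laplacians annihilate `𝟏`. Hence
`M ^ t * P = (M * P) ^ t * P` with `M * P` symmetric, whose spectral norm is the largest `|vᵀ M P v| / ‖v‖²`; it suffices that
this is below one. For `k < 0` the quadratic form of `M` on `𝟏ᗮ` lies between
`a - λpmax + k λcmax` and `a - λpmin + k λcmin` (times `‖v‖²`), and the admissible interval for
`k` is exactly where the first exceeds `-1` and the second is below `1`. Condition C2 is, after clearing the
denominators, the statement that this interval is nonempty.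
-/

open Matrix Finset

open Filter Topology
open scoped Matrix.Norms.L2Operator

variable {n : Type*} [Fintype n]

lemma Matrix.dotProduct_self_nonneg_real (v : n → ℝ) : 0 ≤ v ⬝ᵥ v :=
  sum_nonneg fun _ _ => mul_self_nonneg _

lemma Matrix.IsHermitian.dotProduct_mulVec_comm {A : Matrix n n ℝ} (hA : A.IsHermitian)
    (v w : n → ℝ) : v ⬝ᵥ (A *ᵥ w) = (A *ᵥ v) ⬝ᵥ w := by
  rw [dotProduct_mulVec, ← mulVec_transpose, ← conjTranspose_eq_transpose_of_trivial, hA.eq]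

lemma IsStarProjection.dotProduct_mulVec_self_le {P : Matrix n n ℝ} (hP : IsStarProjection P)
    (v : n → ℝ) : (P *ᵥ v) ⬝ᵥ (P *ᵥ v) ≤ v ⬝ᵥ v := by
  have hPv : (P *ᵥ v) ⬝ᵥ (P *ᵥ v) = v ⬝ᵥ (P *ᵥ v) := by
    rw [← IsHermitian.dotProduct_mulVec_comm hP.isSelfAdjoint, mulVec_mulVec,
      hP.isIdempotentElem.eq]
  have hsq := dotProduct_self_nonneg_real (v - P *ᵥ v)
  simp only [sub_dotProduct, dotProduct_sub, dotProduct_comm (P *ᵥ v) v] at hsq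
  linarith

lemma Matrix.IsHermitian.l2_opNorm_le [DecidableEq n] {Q : Matrix n n ℝ} (hQ : Q.IsHermitian)
    {ρ : ℝ} (hρ : 0 ≤ ρ) (h : ∀ v, |v ⬝ᵥ (Q *ᵥ v)| ≤ ρ * (v ⬝ᵥ v)) : ‖Q‖ ≤ ρ := by
  rw [cstar_norm_def, ContinuousLinearMap.norm_eq_iSup_rayleighQuotient _
    (isSymmetric_toEuclideanLin_iff.mpr hQ)]
  refine ciSup_le fun x => ?_
  rw [ContinuousLinearMap.rayleighQuotient, ContinuousLinearMap.reApplyInnerSelf_apply,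
    abs_div, abs_sq, RCLike.re_to_real, real_inner_comm, inner_toEuclideanCLM,
    ← real_inner_self_eq_norm_sq, EuclideanSpace.inner_eq_star_dotProduct, star_trivial]
  exact div_le_of_le_mul₀ (dotProduct_self_nonneg_real _) hρ (h _)

lemma Matrix.IsHermitian.tendsto_pow_atTop_nhds_zero [DecidableEq n] {Q : Matrix n n ℝ}
    (hQ : Q.IsHermitian) {ρ : ℝ} (hρ₀ : 0 ≤ ρ) (hρ₁ : ρ < 1)
    (h : ∀ v, |v ⬝ᵥ (Q *ᵥ v)| ≤ ρ * (v ⬝ᵥ v)) :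
    Tendsto (fun t : ℕ => Q ^ t) atTop (𝓝 0) :=
  tendsto_pow_atTop_nhds_zero_of_norm_lt_one ((hQ.l2_opNorm_le hρ₀ h).trans_lt hρ₁)

theorem tendsto_pow_mul_of_commute_isStarProjection [DecidableEq n] {M P : Matrix n n ℝ}
    (hM : M.IsHermitian) (hP : IsStarProjection P) (hMP : Commute M P) {ρ : ℝ} (hρ : ρ < 1)
    (h : ∀ w, P *ᵥ w = w → |w ⬝ᵥ (M *ᵥ w)| ≤ ρ * (w ⬝ᵥ w)) :
    Tendsto (fun t : ℕ => M ^ t * P) atTop (𝓝 0) := by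
  have hPh : P.IsHermitian := hP.isSelfAdjoint
  have hQ : (M * P).IsHermitian := by
    rw [IsHermitian, conjTranspose_mul, hPh.eq, hM.eq, hMP.eq]
  have hQv (v : n → ℝ) : v ⬝ᵥ ((M * P) *ᵥ v) = (P *ᵥ v) ⬝ᵥ (M *ᵥ (P *ᵥ v)) := by
    have hMP' : M * P = P * (M * P) := by
      rw [← mul_assoc, ← hMP.eq, mul_assoc, hP.isIdempotentElem.eq]
    rw [hMP', ← mulVec_mulVec, hPh.dotProduct_mulVec_comm, ← mulVec_mulVec]
  have hbound (v : n → ℝ) : |v ⬝ᵥ ((M * P) *ᵥ v)| ≤ max ρ 0 * (v ⬝ᵥ v) := by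
    have hPv : P *ᵥ (P *ᵥ v) = P *ᵥ v := by rw [mulVec_mulVec, hP.isIdempotentElem.eq]
    calc |v ⬝ᵥ ((M * P) *ᵥ v)| ≤ ρ * ((P *ᵥ v) ⬝ᵥ (P *ᵥ v)) := hQv v ▸ h _ hPv
      _ ≤ max ρ 0 * ((P *ᵥ v) ⬝ᵥ (P *ᵥ v)) :=
        mul_le_mul_of_nonneg_right (le_max_left _ _) (dotProduct_self_nonneg_real _)
      _ ≤ max ρ 0 * (v ⬝ᵥ v) :=
        mul_le_mul_of_nonneg_left (hP.dotProduct_mulVec_self_le v) (le_max_right _ _)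
  have hpow (t : ℕ) : M ^ t * P = (M * P) ^ t * P := by
    rw [hMP.mul_pow, mul_assoc, ← pow_succ, hP.isIdempotentElem.pow_succ_eq]
  simpa only [hpow, zero_mul] using
    (hQ.tendsto_pow_atTop_nhds_zero (le_max_right ρ 0) (max_lt hρ one_pos) hbound).mul_const P

noncomputable def centeringMatrix (n : Type*) [Fintype n] [DecidableEq n] : Matrix n n ℝ :=
  1 - (Fintype.card n : ℝ)⁻¹ • of fun _ _ => 1

section centering

variable [DecidableEq n]

lemma centeringMatrix_mulVec (v : n → ℝ) :
    centeringMatrix n *ᵥ v = v - fun _ => (Fintype.card n : ℝ)⁻¹ * ∑ i, v i := by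
  rw [centeringMatrix, sub_mulVec, one_mulVec, smul_mulVec]
  ext i
  simp [mulVec, dotProduct]

lemma sum_centeringMatrix_mulVec (v : n → ℝ) : ∑ i, (centeringMatrix n *ᵥ v) i = 0 := by
  rcases eq_or_ne (Fintype.card n : ℝ) 0 with h | h
  · simp_all [Fintype.card_eq_zero_iff.mp (by exact_mod_cast h)]
  · simp [centeringMatrix_mulVec, sum_sub_distrib, h]

lemma centeringMatrix_mulVec_of_sum_eq_zero {v : n → ℝ} (hv : ∑ i, v i = 0) :
    centeringMatrix n *ᵥ v = v := by
  rw [centeringMatrix_mulVec, hv, mul_zero]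
  exact sub_zero v

lemma isStarProjection_centeringMatrix : IsStarProjection (centeringMatrix n) where
  isIdempotentElem := ext_iff_mulVec.mpr fun v => by
    rw [← mulVec_mulVec, centeringMatrix_mulVec_of_sum_eq_zero (sum_centeringMatrix_mulVec v)]
  isSelfAdjoint := by
    ext i j
    simp [centeringMatrix, one_apply, eq_comm]

lemma commute_centeringMatrix {L : Matrix n n ℝ} (hL : L.IsSymm)
    (hL1 : L *ᵥ (fun _ => 1) = 0) : Commute L (centeringMatrix n) := by
  have hLJ : L * of (fun _ _ => 1) = 0 := by
    ext i j
    simpa [mul_apply, mulVec, dotProduct] using congrFun hL1 i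
  have hJL : of (fun _ _ => 1) * L = 0 := by
    ext i j
    simpa [mul_apply, mulVec, dotProduct, hL.apply j] using congrFun hL1 j
  exact (Commute.one_right L).sub_right ((show Commute L _ from hLJ.trans hJL.symm).smul_right _)

end centering

lemma dotProduct_mulVec_closedLoop [DecidableEq n] (a k : ℝ) (Lp Lc : Matrix n n ℝ)
    (w : n → ℝ) : w ⬝ᵥ ((a • 1 - Lp + k • Lc) *ᵥ w) =
      a * (w ⬝ᵥ w) - w ⬝ᵥ (Lp *ᵥ w) + k * (w ⬝ᵥ (Lc *ᵥ w)) := by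
  simp [add_mulVec, sub_mulVec, smul_mulVec, dotProduct_add, dotProduct_sub]

lemma abs_dotProduct_mulVec_closedLoop_le [DecidableEq n] {a k lpmin lpmax lcmin lcmax : ℝ}
    {Lp Lc : Matrix n n ℝ} (hk : k ≤ 0) {w : n → ℝ}
    (hp : lpmin * (w ⬝ᵥ w) ≤ w ⬝ᵥ (Lp *ᵥ w) ∧ w ⬝ᵥ (Lp *ᵥ w) ≤ lpmax * (w ⬝ᵥ w))
    (hc : lcmin * (w ⬝ᵥ w) ≤ w ⬝ᵥ (Lc *ᵥ w) ∧ w ⬝ᵥ (Lc *ᵥ w) ≤ lcmax * (w ⬝ᵥ w)) :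
    |w ⬝ᵥ ((a • 1 - Lp + k • Lc) *ᵥ w)|
      ≤ max (a - lpmin + k * lcmin) (lpmax - a - k * lcmax) * (w ⬝ᵥ w) := by
  have hw := dotProduct_self_nonneg_real w
  have hmin := mul_le_mul_of_nonneg_right
    (le_max_left (a - lpmin + k * lcmin) (lpmax - a - k * lcmax)) hw
  have hmax := mul_le_mul_of_nonneg_right
    (le_max_right (a - lpmin + k * lcmin) (lpmax - a - k * lcmax)) hw
  rw [dotProduct_mulVec_closedLoop, abs_le]
  constructor <;> linarith [mul_le_mul_of_nonpos_left hc.1 hk, mul_le_mul_of_nonpos_left hc.2 hk]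

theorem stmt_3_general (N : ℕ) (a : ℝ)
    (Lp Lc : Matrix (Fin N) (Fin N) ℝ)
    (hLpsymm : Lp.IsSymm) (hLcsymm : Lc.IsSymm)
    (hLp1 : Lp *ᵥ (fun _ => (1 : ℝ)) = 0) (hLc1 : Lc *ᵥ (fun _ => (1 : ℝ)) = 0)
    (lpmin lpmax lcmin lcmax : ℝ)
    (hc0 : 0 < lcmin) (hc : lcmin ≤ lcmax)
    (hqp : ∀ v : Fin N → ℝ, (∑ i, v i) = 0 →
      lpmin * (v ⬝ᵥ v) ≤ v ⬝ᵥ (Lp *ᵥ v) ∧ v ⬝ᵥ (Lp *ᵥ v) ≤ lpmax * (v ⬝ᵥ v))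
    (hqc : ∀ v : Fin N → ℝ, (∑ i, v i) = 0 →
      lcmin * (v ⬝ᵥ v) ≤ v ⬝ᵥ (Lc *ᵥ v) ∧ v ⬝ᵥ (Lc *ᵥ v) ≤ lcmax * (v ⬝ᵥ v))
    (γc Δp : ℝ) (hγ : γc = lcmax / lcmin) (hΔ : Δp = lpmax - lpmin)
    (hC2a : lpmax < 1 + a) (hC2b : (γc - 1) * (-1 - a + lpmax) > γc * (Δp - 2)) :
    (∃ k : ℝ, k < 0 ∧ (-1 - a + lpmax) / lcmax < k ∧ k < (1 - a + lpmin) / lcmin) ∧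
    ∀ k : ℝ, k < 0 → (-1 - a + lpmax) / lcmax < k → k < (1 - a + lpmin) / lcmin →
      Filter.Tendsto
        (fun t : ℕ => (a • (1 : Matrix (Fin N) (Fin N) ℝ) - Lp + k • Lc) ^ t *
          ((1 : Matrix (Fin N) (Fin N) ℝ) - (N : ℝ)⁻¹ • Matrix.of fun _ _ => (1 : ℝ)))
        Filter.atTop (nhds 0) := by
  subst hγ hΔ
  have hlcmax : 0 < lcmax := hc0.trans_le hc
  have hgap : (-1 - a + lpmax) / lcmax < (1 - a + lpmin) / lcmin := by
    rw [div_lt_div_iff₀ hlcmax hc0]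
    have := mul_lt_mul_of_pos_right hC2b hc0
    field_simp at this
    linarith
  refine ⟨?_, fun k hk0 hkl hku => ?_⟩
  · obtain ⟨k, hk₁, hk₂⟩ :=
      exists_between (lt_min hgap (div_neg_of_neg_of_pos (by linarith) hlcmax))
    exact ⟨k, hk₂.trans_le (min_le_right _ _), hk₁, hk₂.trans_le (min_le_left _ _)⟩
  rw [show (1 : Matrix (Fin N) (Fin N) ℝ) - (N : ℝ)⁻¹ • of (fun _ _ => (1 : ℝ)) =
    centeringMatrix (Fin N) by rw [centeringMatrix, Fintype.card_fin]]
  refine tendsto_pow_mul_of_commute_isStarProjection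
    (isHermitian_iff_isSymm.mpr (((isSymm_one.smul a).sub hLpsymm).add (hLcsymm.smul k)))
    isStarProjection_centeringMatrix
    ((((Commute.one_left _).smul_left a).sub_left (commute_centeringMatrix hLpsymm hLp1)).add_left
      ((commute_centeringMatrix hLcsymm hLc1).smul_left k))
    (ρ := max (a - lpmin + k * lcmin) (lpmax - a - k * lcmax)) ?_ fun w hw => ?_
  · rw [lt_div_iff₀ hc0] at hku
    rw [div_lt_iff₀ hlcmax] at hkl
    exact max_lt (by linarith) (by linarith)
  · have hsum : ∑ i, w i = 0 := hw ▸ sum_centeringMatrix_mulVec w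
    exact abs_dotProduct_mulVec_closedLoop_le hk0.le (hqp w hsum) (hqc w hsum)

theorem stmt_3 (N : ℕ) (hN : 2 ≤ N) (a : ℝ)
    (Lp Lc : Matrix (Fin N) (Fin N) ℝ)
    (hLpsymm : Lp.IsSymm) (hLcsymm : Lc.IsSymm)
    (hLp1 : Lp *ᵥ (fun _ => (1 : ℝ)) = 0) (hLc1 : Lc *ᵥ (fun _ => (1 : ℝ)) = 0)
    (lpmin lpmax lcmin lcmax : ℝ) (hp : lpmin ≤ lpmax)
    (hc0 : 0 < lcmin) (hc : lcmin ≤ lcmax)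
    (hqp : ∀ v : Fin N → ℝ, (∑ i, v i) = 0 →
      lpmin * (v ⬝ᵥ v) ≤ v ⬝ᵥ (Lp *ᵥ v) ∧ v ⬝ᵥ (Lp *ᵥ v) ≤ lpmax * (v ⬝ᵥ v))
    (hqc : ∀ v : Fin N → ℝ, (∑ i, v i) = 0 →
      lcmin * (v ⬝ᵥ v) ≤ v ⬝ᵥ (Lc *ᵥ v) ∧ v ⬝ᵥ (Lc *ᵥ v) ≤ lcmax * (v ⬝ᵥ v))
    (γc Δp : ℝ) (hγ : γc = lcmax / lcmin) (hΔ : Δp = lpmax - lpmin)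
    (hC2a : lpmax < 1 + a) (hC2b : (γc - 1) * (-1 - a + lpmax) > γc * (Δp - 2)) :
    (∃ k : ℝ, k < 0 ∧ (-1 - a + lpmax) / lcmax < k ∧ k < (1 - a + lpmin) / lcmin) ∧
    ∀ k : ℝ, k < 0 → (-1 - a + lpmax) / lcmax < k → k < (1 - a + lpmin) / lcmin →
      Filter.Tendsto
        (fun t : ℕ => (a • (1 : Matrix (Fin N) (Fin N) ℝ) - Lp + k • Lc) ^ t *
          ((1 : Matrix (Fin N) (Fin N) ℝ) - (N : ℝ)⁻¹ • Matrix.of fun _ _ => (1 : ℝ)))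
        Filter.atTop (nhds 0) :=
  stmt_3_general N a Lp Lc hLpsymm hLcsymm hLp1 hLc1 lpmin lpmax lcmin lcmax hc0 hc hqp hqc γc Δp hγ
    hΔ hC2a hC2b
end

section
/- Let m ≥ 1, let a ∈ ℝ, and let λp : Fin m → ℝ and λc : Fin m → ℝ be families of reals with λc i > 0 for all i. Set γc = (max over i of λc i)/(min over i of λc i). If there exists k ∈ ℝ such that |a − λp i + k·(λc i)| < 1 for every i, then |γc·(min over i of |a − λp i|) − (max over i of |a − λp i|)| < γc + 1. -/
open Finset

lemma abs_split (x y : ℝ) (h : |x + y| < 1) : |x| < 1 + |y| ∧ |y| - 1 < |x| := by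
  have h1 := abs_add_le (x + y) (-y)
  rw [add_neg_cancel_right, abs_neg] at h1
  have h2 := abs_add_le (x + y) (-x)
  rw [show x + y + -x = y by ring, abs_neg] at h2
  constructor <;> linarith

theorem stmt_4 (m : ℕ) (hm : 1 ≤ m) (a : ℝ)
    (lp lc : Fin m → ℝ) (hlc : ∀ i, 0 < lc i)
    (hne : (Finset.univ : Finset (Fin m)).Nonempty)
    (γc : ℝ) (hγc : γc = Finset.univ.sup' hne lc / Finset.univ.inf' hne lc)
    (h : ∃ k : ℝ, ∀ i, |a - lp i + k * lc i| < 1) :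
    |γc * Finset.univ.inf' hne (fun i => |a - lp i|)
      - Finset.univ.sup' hne (fun i => |a - lp i|)| < γc + 1 := by
  obtain ⟨k, hk⟩ := h
  have key1 : ∀ i, |a - lp i| < 1 + |k| * lc i := by
    intro i
    have := (abs_split (a - lp i) (k * lc i) (hk i)).1
    rw [abs_mul, abs_of_pos (hlc i)] at this
    exact this
  have key2 : ∀ i, |k| * lc i - 1 < |a - lp i| := by
    intro i
    have := (abs_split (a - lp i) (k * lc i) (hk i)).2
    rw [abs_mul, abs_of_pos (hlc i)] at this
    exact this
  have hLminpos : 0 < Finset.univ.inf' hne lc := by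
    rw [Finset.lt_inf'_iff]
    exact fun i _ => hlc i
  have hγLmin : γc * Finset.univ.inf' hne lc = Finset.univ.sup' hne lc := by
    rw [hγc]; field_simp
  obtain ⟨imin, _, himin⟩ := Finset.exists_mem_eq_inf' hne lc
  obtain ⟨imax, _, himax⟩ := Finset.exists_mem_eq_sup' hne lc
  obtain ⟨i1, _, hi1⟩ := Finset.exists_mem_eq_sup' hne (fun i => |a - lp i|)
  obtain ⟨i2, _, hi2⟩ := Finset.exists_mem_eq_inf' hne (fun i => |a - lp i|)
  have hLmaxge : Finset.univ.inf' hne lc ≤ Finset.univ.sup' hne lc := by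
    rw [himax]
    exact Finset.inf'_le lc (Finset.mem_univ imax)
  have hγpos : 0 < γc := by
    rw [hγc]
    exact div_pos (lt_of_lt_of_le hLminpos hLmaxge) hLminpos
  have hkey : |k| * Finset.univ.sup' hne lc = γc * (|k| * Finset.univ.inf' hne lc) := by
    rw [← hγLmin]; ring
  rw [abs_lt]
  constructor
  · -- M - γc * mI < γc + 1
    have hMle : Finset.univ.sup' hne (fun i => |a - lp i|) < 1 + |k| * Finset.univ.sup' hne lc := by
      rw [hi1]
      have h1 := key1 i1
      have h2 : lc i1 ≤ Finset.univ.sup' hne lc := Finset.le_sup' lc (Finset.mem_univ i1)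
      nlinarith [abs_nonneg k]
    have hmIge : |k| * Finset.univ.inf' hne lc - 1 < Finset.univ.inf' hne (fun i => |a - lp i|) := by
      rw [hi2]
      have h1 := key2 i2
      have h2 : Finset.univ.inf' hne lc ≤ lc i2 := Finset.inf'_le lc (Finset.mem_univ i2)
      nlinarith [abs_nonneg k]
    have h3 := mul_lt_mul_of_pos_left hmIge hγpos
    nlinarith [h3, hkey, hMle]
  · -- γc * mI - M < γc + 1
    have hmIle : Finset.univ.inf' hne (fun i => |a - lp i|) < 1 + |k| * Finset.univ.inf' hne lc := by
      calc Finset.univ.inf' hne (fun i => |a - lp i|) ≤ |a - lp imin| :=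
            Finset.inf'_le _ (Finset.mem_univ imin)
        _ < 1 + |k| * lc imin := key1 imin
        _ = 1 + |k| * Finset.univ.inf' hne lc := by rw [himin]
    have hMge : |k| * Finset.univ.sup' hne lc - 1 < Finset.univ.sup' hne (fun i => |a - lp i|) := by
      calc |k| * Finset.univ.sup' hne lc - 1 = |k| * lc imax - 1 := by rw [himax]
        _ < |a - lp imax| := key2 imax
        _ ≤ Finset.univ.sup' hne (fun i => |a - lp i|) :=
            Finset.le_sup' (fun i => |a - lp i|) (Finset.mem_univ imax)
    have h3 := mul_lt_mul_of_pos_left hmIle hγpos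
    nlinarith [h3, hkey, hMge]
end

section
/- Let n ≥ 1, let P be a real symmetric positive definite n×n matrix, A a real n×n matrix, and B a nonzero real n×1 matrix (so the 1×1 matrix BᵀPB is positive, hence invertible). Let k, α, λ ∈ ℝ and set K = −k·(BᵀPB)⁻¹·BᵀPA ∈ ℝ^{1×n}. Then (α·A + λ·B·K)ᵀ·P·(α·A + λ·B·K) = α²·AᵀPA + (λ²k² − 2αλk)·AᵀPB(BᵀPB)⁻¹BᵀPA. -/
/-!
With `S = BᵀPB` and `G = S⁻¹BᵀPA`, symmetry of `P` and `S` makes the three cross terms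
`AᵀP(BG)`, `(BG)ᵀPA` and `(BG)ᵀP(BG) = Gᵀ S G` all equal to `AᵀPB S⁻¹ BᵀPA`, so expanding the
quadratic form of `αA + μBG` gives `α² AᵀPA + (2αμ + μ²) AᵀPB S⁻¹ BᵀPA`; the gain
`K = -k G` is the case `μ = -λk`. Invertibility of the `1 × 1` matrix `S` comes from `P ≻ 0`
and `B ≠ 0`.
-/

open Matrix

namespace Matrix

theorem mulVec_injective_of_ne_zero {K n m : Type*} [Field K] [Fintype m] [Unique m]
    {B : Matrix n m K} (hB : B ≠ 0) : Function.Injective B.mulVec := by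
  rw [mulVec_injective_iff, linearIndependent_unique_iff]
  intro h
  exact hB (ext fun i j => by simpa [Subsingleton.elim j default] using congrFun h i)

variable {R n m l : Type*} [CommRing R] [Fintype n] [Fintype m] [DecidableEq m]
  {P : Matrix n n R} (B : Matrix n m R) (A : Matrix n l R)

theorem transpose_mul_mul_feedback_mul (hP : Pᵀ = P) :
    (B * ((Bᵀ * P * B)⁻¹ * (Bᵀ * P * A)))ᵀ * P * A =
      Aᵀ * P * B * (Bᵀ * P * B)⁻¹ * (Bᵀ * P * A) := by
  simp only [transpose_mul, transpose_nonsing_inv, transpose_transpose, hP, Matrix.mul_assoc]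

theorem transpose_feedback_mul_mul_feedback (hP : Pᵀ = P) (hS : IsUnit (Bᵀ * P * B).det) :
    (B * ((Bᵀ * P * B)⁻¹ * (Bᵀ * P * A)))ᵀ * P * (B * ((Bᵀ * P * B)⁻¹ * (Bᵀ * P * A))) =
      Aᵀ * P * B * (Bᵀ * P * B)⁻¹ * (Bᵀ * P * A) := by
  set G := (Bᵀ * P * B)⁻¹ * (Bᵀ * P * A)
  calc _ = Gᵀ * ((Bᵀ * P * B) * (Bᵀ * P * B)⁻¹) * (Bᵀ * P * A) := by
        simp only [G, transpose_mul, Matrix.mul_assoc]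
    _ = (B * G)ᵀ * P * A := by
        rw [mul_nonsing_inv _ hS, Matrix.mul_one]
        simp only [transpose_mul, Matrix.mul_assoc]
    _ = _ := transpose_mul_mul_feedback_mul B A hP

theorem transpose_mul_mul_add_feedback (hP : Pᵀ = P) (hS : IsUnit (Bᵀ * P * B).det) (α μ : R) :
    (α • A + μ • (B * ((Bᵀ * P * B)⁻¹ * (Bᵀ * P * A))))ᵀ * P *
        (α • A + μ • (B * ((Bᵀ * P * B)⁻¹ * (Bᵀ * P * A)))) =
      α ^ 2 • (Aᵀ * P * A) +
        (2 * α * μ + μ ^ 2) • (Aᵀ * P * B * (Bᵀ * P * B)⁻¹ * (Bᵀ * P * A)) := by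
  have hcross : Aᵀ * P * (B * ((Bᵀ * P * B)⁻¹ * (Bᵀ * P * A))) =
      Aᵀ * P * B * (Bᵀ * P * B)⁻¹ * (Bᵀ * P * A) := by
    simp only [Matrix.mul_assoc]
  simp only [transpose_add, transpose_smul, Matrix.add_mul, Matrix.mul_add, Matrix.smul_mul,
    Matrix.mul_smul, hcross, transpose_mul_mul_feedback_mul B A hP,
    transpose_feedback_mul_mul_feedback B A hP hS]
  module

end Matrix

theorem stmt_7_general (n : ℕ)
    (P : Matrix (Fin n) (Fin n) ℝ) (hPpd : P.PosDef)
    (A : Matrix (Fin n) (Fin n) ℝ) (B : Matrix (Fin n) (Fin 1) ℝ) (hB : B ≠ 0)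
    (k α lam : ℝ) (K : Matrix (Fin 1) (Fin n) ℝ)
    (hK : K = (-k) • ((Bᵀ * P * B)⁻¹ * (Bᵀ * P * A))) :
    (α • A + lam • (B * K))ᵀ * P * (α • A + lam • (B * K)) =
      α ^ 2 • (Aᵀ * P * A) +
        (lam ^ 2 * k ^ 2 - 2 * α * lam * k) •
          (Aᵀ * P * B * (Bᵀ * P * B)⁻¹ * (Bᵀ * P * A)) := by
  have hP : Pᵀ = P := by rw [← conjTranspose_eq_transpose_of_trivial, hPpd.1]
  have hS : IsUnit (Bᵀ * P * B).det := by
    rw [← isUnit_iff_isUnit_det, ← conjTranspose_eq_transpose_of_trivial]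
    exact (hPpd.conjTranspose_mul_mul_same (mulVec_injective_of_ne_zero hB)).isUnit
  have hgain : lam • (B * K) = (-(lam * k)) • (B * ((Bᵀ * P * B)⁻¹ * (Bᵀ * P * A))) := by
    rw [hK, Matrix.mul_smul, smul_smul, mul_neg]
  rw [hgain, transpose_mul_mul_add_feedback B A hP hS]
  congr 2
  ring

theorem stmt_7 (n : ℕ) (hn : 1 ≤ n)
    (P : Matrix (Fin n) (Fin n) ℝ) (hPsymm : P.IsSymm) (hPpd : P.PosDef)
    (A : Matrix (Fin n) (Fin n) ℝ) (B : Matrix (Fin n) (Fin 1) ℝ) (hB : B ≠ 0)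
    (k α lam : ℝ) (K : Matrix (Fin 1) (Fin n) ℝ)
    (hK : K = (-k) • ((Bᵀ * P * B)⁻¹ * (Bᵀ * P * A))) :
    (α • A + lam • (B * K))ᵀ * P * (α • A + lam • (B * K)) =
      α ^ 2 • (Aᵀ * P * A) +
        (lam ^ 2 * k ^ 2 - 2 * α * lam * k) •
          (Aᵀ * P * B * (Bᵀ * P * B)⁻¹ * (Bᵀ * P * A)) :=
  stmt_7_general n P hPpd A B hB k α lam K hK
end

section
/- Let m ≥ 1, and let a : Fin m → ℝ and λ : Fin m → ℝ be families with a i ≥ 0 and λ i > 0 for all i. Set γ = (max over i of λ i)/(min over i of λ i). If max over i of (a i − 1)/(λ i) < min over i of (a i + 1)/(λ i), then |γ·(min over i of a i) − (max over i of a i)| < γ + 1. -/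
open Finset

theorem stmt_11 (m : ℕ) (hm : 1 ≤ m) (a lam : Fin m → ℝ)
    (ha : ∀ i, 0 ≤ a i) (hlam : ∀ i, 0 < lam i)
    (hne : (Finset.univ : Finset (Fin m)).Nonempty)
    (γ : ℝ) (hγ : γ = Finset.univ.sup' hne lam / Finset.univ.inf' hne lam)
    (h : (Finset.univ.sup' hne fun i => (a i - 1) / lam i)
        < Finset.univ.inf' hne fun i => (a i + 1) / lam i) :
    |γ * Finset.univ.inf' hne a - Finset.univ.sup' hne a| < γ + 1 := by
  set L := Finset.univ.sup' hne lam with hL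
  set l := Finset.univ.inf' hne lam with hl
  set A := Finset.univ.sup' hne a with hA
  set B := Finset.univ.inf' hne a with hB
  obtain ⟨p, _, hp⟩ := Finset.exists_mem_eq_sup' hne lam
  obtain ⟨q, _, hq⟩ := Finset.exists_mem_eq_inf' hne lam
  obtain ⟨i, _, hi⟩ := Finset.exists_mem_eq_sup' hne a
  obtain ⟨j, _, hj⟩ := Finset.exists_mem_eq_inf' hne a
  have hlpos : 0 < l := by rw [hl, hq]; exact hlam q
  have hLpos : 0 < L := by rw [hL, hp]; exact hlam p
  have hlL : l ≤ L :=
    le_trans (Finset.inf'_le _ (Finset.mem_univ p)) (by rw [hL, hp])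
  have key : ∀ s t : Fin m, (a s - 1) / lam s < (a t + 1) / lam t := by
    intro s t
    calc (a s - 1) / lam s
        ≤ _ := Finset.le_sup' (fun i => (a i - 1) / lam i) (Finset.mem_univ s)
      _ < _ := h
      _ ≤ (a t + 1) / lam t :=
        Finset.inf'_le (fun i => (a i + 1) / lam i) (Finset.mem_univ t)
  have hBA : B ≤ A := le_trans (Finset.inf'_le _ (Finset.mem_univ i)) (by rw [hA, hi])
  have hB0 : 0 ≤ B := le_trans (ha j) (by rw [hB, hj])
  have hA0 : 0 ≤ A := le_trans hB0 hBA
  have hγl : γ * l = L := by rw [hγ]; field_simp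
  have hγpos : 0 < γ := by rw [hγ]; positivity
  have hAi : A = a i := by rw [hA, hi]
  have hBj : B = a j := by rw [hB, hj]
  have hLp : L = lam p := by rw [hL, hp]
  have hlq : l = lam q := by rw [hl, hq]
  -- second inequality: L*B - l*A < L + l
  have k2' : (a q - 1) * L < (a p + 1) * l := by
    have := (div_lt_div_iff₀ hlpos hLpos).mp (by rw [hlq, hLp]; exact key q p)
    linarith
  have haq : B ≤ a q := Finset.inf'_le _ (Finset.mem_univ q)
  have hap : a p ≤ A := by rw [hA]; exact Finset.le_sup' _ (Finset.mem_univ p)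
  have ineq2 : L * B - l * A < L + l := by
    nlinarith [mul_le_mul_of_nonneg_left haq hLpos.le,
      mul_le_mul_of_nonneg_left hap hlpos.le]
  -- first inequality: l*A - L*B < L + l
  have k1' : (a i - 1) * lam j < (a j + 1) * lam i :=
    (div_lt_div_iff₀ (hlam i) (hlam j)).mp (key i j)
  have hli : lam i ≤ L := by rw [hL]; exact Finset.le_sup' _ (Finset.mem_univ i)
  have hlj : l ≤ lam j := Finset.inf'_le _ (Finset.mem_univ j)
  have ineq1 : l * A - L * B < L + l := by
    rcases le_or_gt 1 A with hA1 | hA1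
    · have h1 : l * (A - 1) ≤ lam j * (A - 1) :=
        mul_le_mul_of_nonneg_right hlj (by linarith)
      have h2 : lam i * (B + 1) ≤ L * (B + 1) :=
        mul_le_mul_of_nonneg_right hli (by linarith)
      nlinarith [hAi, hBj, h1, h2]
    · nlinarith
  have el : l * (γ + 1) = L + l := by linear_combination hγl
  have g1 : A - γ * B < γ + 1 := by
    have h' : l * (A - γ * B) < l * (γ + 1) := by
      have e1 : l * (A - γ * B) = l * A - L * B := by linear_combination (-B) * hγl
      rw [e1, el]; exact ineq1
    exact lt_of_mul_lt_mul_left h' hlpos.le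
  have g2 : γ * B - A < γ + 1 := by
    have h' : l * (γ * B - A) < l * (γ + 1) := by
      have e2 : l * (γ * B - A) = L * B - l * A := by linear_combination B * hγl
      rw [e2, el]; exact ineq2
    exact lt_of_mul_lt_mul_left h' hlpos.le
  rw [abs_lt]
  exact ⟨by linarith, by linarith⟩
end

section
/- Let m ≥ 1 and a ∈ ℝ. Let P and C be real symmetric m×m matrices such that every eigenvalue of P lies in [λpmin, λpmax] and every eigenvalue of C lies in [λcmin, λcmax] with 0 < λcmin. Let k ≥ 0 satisfy −1 − a + λpmax < k·λcmin and k·λcmax < 1 − a + λpmin. Then every eigenvalue of a·I_m − P + k·C lies in the open interval (−1, 1); in particular a·I_m − P + k·C is Schur stable. -/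
/-! In the Loewner order, the eigenvalue bounds say `λpmin • 1 ≤ P ≤ λpmax • 1` and
`λcmin • 1 ≤ C ≤ λcmax • 1`. Since `k ≥ 0`, this sandwiches `a • 1 - P + k • C` between
`(a - λpmax + k λcmin) • 1` and `(a - λpmin + k λcmax) • 1`, and both scalars lie in `(-1, 1)`.
A real symmetric matrix has only real complex eigenvalues, so the bounds give Schur stability. -/

open Matrix

/-- The multiset of complex eigenvalues (roots of the characteristic polynomial over ℂ,
with multiplicity) of a real square matrix. -/
noncomputable def cRoots {n : ℕ} (M : Matrix (Fin n) (Fin n) ℝ) : Multiset ℂ :=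
  (M.map (Complex.ofReal)).charpoly.roots

/-- A real square matrix is Schur stable if all of its complex eigenvalues have
modulus strictly less than 1. -/
def SchurStable {n : ℕ} (M : Matrix (Fin n) (Fin n) ℝ) : Prop :=
  ∀ μ ∈ cRoots M, ‖μ‖ < 1

open scoped MatrixOrder

namespace Matrix

variable {n 𝕜 : Type*} [Fintype n] [DecidableEq n] [RCLike 𝕜]

lemma IsHermitian.algebraMap_le_iff_le_eigenvalues {A : Matrix n n 𝕜} (hA : A.IsHermitian)
    {r : ℝ} : algebraMap ℝ (Matrix n n 𝕜) r ≤ A ↔ ∀ i, r ≤ hA.eigenvalues i := by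
  rw [algebraMap_le_iff_le_spectrum hA.isSelfAdjoint, hA.spectrum_real_eq_range_eigenvalues,
    Set.forall_mem_range]

lemma IsHermitian.le_algebraMap_iff_eigenvalues_le {A : Matrix n n 𝕜} (hA : A.IsHermitian)
    {r : ℝ} : A ≤ algebraMap ℝ (Matrix n n 𝕜) r ↔ ∀ i, hA.eigenvalues i ≤ r := by
  rw [le_algebraMap_iff_spectrum_le hA.isSelfAdjoint, hA.spectrum_real_eq_range_eigenvalues,
    Set.forall_mem_range]

lemma algebraMap_le_smul_one_sub_add_smul {A B : Matrix n n 𝕜} {a k p c : ℝ} (hk : 0 ≤ k)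
    (hA : A ≤ algebraMap ℝ _ p) (hB : algebraMap ℝ _ c ≤ B) :
    algebraMap ℝ (Matrix n n 𝕜) (a - p + k * c) ≤ a • 1 - A + k • B := by
  rw [map_add, map_sub, map_mul, ← Algebra.smul_def, Algebra.algebraMap_eq_smul_one a]
  gcongr

lemma smul_one_sub_add_smul_le_algebraMap {A B : Matrix n n 𝕜} {a k p c : ℝ} (hk : 0 ≤ k)
    (hA : algebraMap ℝ _ p ≤ A) (hB : B ≤ algebraMap ℝ _ c) :
    a • 1 - A + k • B ≤ algebraMap ℝ (Matrix n n 𝕜) (a - p + k * c) := by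
  rw [map_add, map_sub, map_mul, ← Algebra.smul_def, Algebra.algebraMap_eq_smul_one a]
  gcongr

end Matrix

lemma Matrix.IsHermitian.cRoots_eq {n : ℕ} {M : Matrix (Fin n) (Fin n) ℝ} (hM : M.IsHermitian) :
    cRoots M = Finset.univ.val.map fun i => (hM.eigenvalues i : ℂ) := by
  rw [cRoots, show M.map Complex.ofReal = M.map Complex.ofRealHom from rfl, charpoly_map,
    hM.splits_charpoly.roots_map, hM.roots_charpoly_eq_eigenvalues, Multiset.map_map]
  rfl

lemma Matrix.IsHermitian.schurStable {n : ℕ} {M : Matrix (Fin n) (Fin n) ℝ} (hM : M.IsHermitian)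
    (h : ∀ i, -1 < hM.eigenvalues i ∧ hM.eigenvalues i < 1) : SchurStable M := by
  intro μ hμ
  obtain ⟨i, -, rfl⟩ := Multiset.mem_map.mp (hM.cRoots_eq ▸ hμ)
  rw [Complex.norm_real, Real.norm_eq_abs]
  exact abs_lt.mpr (h i)

theorem stmt_12_general (m : ℕ) (a : ℝ)
    (P C : Matrix (Fin m) (Fin m) ℝ)
    (hP : P.IsHermitian) (hC : C.IsHermitian)
    (lpmin lpmax lcmin lcmax : ℝ)
    (hPev : ∀ i, lpmin ≤ hP.eigenvalues i ∧ hP.eigenvalues i ≤ lpmax)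
    (hCev : ∀ i, lcmin ≤ hC.eigenvalues i ∧ hC.eigenvalues i ≤ lcmax)
    (k : ℝ) (hk : 0 ≤ k)
    (h1 : -1 - a + lpmax < k * lcmin) (h2 : k * lcmax < 1 - a + lpmin) :
    (∀ (hM : (a • (1 : Matrix (Fin m) (Fin m) ℝ) - P + k • C).IsHermitian) (i : Fin m),
        -1 < hM.eigenvalues i ∧ hM.eigenvalues i < 1) ∧
    SchurStable (a • (1 : Matrix (Fin m) (Fin m) ℝ) - P + k • C) := by
  have hlower := algebraMap_le_smul_one_sub_add_smul (a := a) hk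
    (hP.le_algebraMap_iff_eigenvalues_le.mpr fun i => (hPev i).2)
    (hC.algebraMap_le_iff_le_eigenvalues.mpr fun i => (hCev i).1)
  have hupper := smul_one_sub_add_smul_le_algebraMap (a := a) hk
    (hP.algebraMap_le_iff_le_eigenvalues.mpr fun i => (hPev i).1)
    (hC.le_algebraMap_iff_eigenvalues_le.mpr fun i => (hCev i).2)
  have hbounds : ∀ (hM : (a • (1 : Matrix (Fin m) (Fin m) ℝ) - P + k • C).IsHermitian) i,
      -1 < hM.eigenvalues i ∧ hM.eigenvalues i < 1 := fun hM i =>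
    have := hM.algebraMap_le_iff_le_eigenvalues.mp hlower i
    have := hM.le_algebraMap_iff_eigenvalues_le.mp hupper i
    ⟨by linarith, by linarith⟩
  have hM : (a • (1 : Matrix (Fin m) (Fin m) ℝ) - P + k • C).IsHermitian :=
    ((isHermitian_one.smul (IsSelfAdjoint.all a)).sub hP).add (hC.smul (IsSelfAdjoint.all k))
  exact ⟨hbounds, hM.schurStable (hbounds hM)⟩

theorem stmt_12 (m : ℕ) (hm : 1 ≤ m) (a : ℝ)
    (P C : Matrix (Fin m) (Fin m) ℝ)
    (hP : P.IsHermitian) (hC : C.IsHermitian)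
    (lpmin lpmax lcmin lcmax : ℝ) (hlc : 0 < lcmin)
    (hPev : ∀ i, lpmin ≤ hP.eigenvalues i ∧ hP.eigenvalues i ≤ lpmax)
    (hCev : ∀ i, lcmin ≤ hC.eigenvalues i ∧ hC.eigenvalues i ≤ lcmax)
    (k : ℝ) (hk : 0 ≤ k)
    (h1 : -1 - a + lpmax < k * lcmin) (h2 : k * lcmax < 1 - a + lpmin) :
    (∀ (hM : (a • (1 : Matrix (Fin m) (Fin m) ℝ) - P + k • C).IsHermitian) (i : Fin m),
        -1 < hM.eigenvalues i ∧ hM.eigenvalues i < 1) ∧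
    SchurStable (a • (1 : Matrix (Fin m) (Fin m) ℝ) - P + k • C) :=
  stmt_12_general m a P C hP hC lpmin lpmax lcmin lcmax hPev hCev k hk h1 h2
end

section
/- Let a ∈ ℝ and let λpmin ≤ λpmax and 0 < λcmin ≤ λcmax be reals. Set γc = λcmax/λcmin and Δp = λpmax − λpmin. Then the set {k ∈ ℝ : k ≥ 0 and (−1 − a + λpmax)/λcmin < k < (1 − a + λpmin)/λcmax} is nonempty if and only if λpmin > a − 1 and (γc − 1)(1 − a + λpmin) < γc(2 − Δp). -/
theorem stmt_14 (a lpmin lpmax lcmin lcmax : ℝ)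
    (hp : lpmin ≤ lpmax) (hc0 : 0 < lcmin) (hc : lcmin ≤ lcmax)
    (γc Δp : ℝ) (hγ : γc = lcmax / lcmin) (hΔ : Δp = lpmax - lpmin) :
    {k : ℝ | 0 ≤ k ∧ (-1 - a + lpmax) / lcmin < k ∧ k < (1 - a + lpmin) / lcmax}.Nonempty ↔
      (lpmin > a - 1 ∧ (γc - 1) * (1 - a + lpmin) < γc * (2 - Δp)) := by
  have hc0' : 0 < lcmax := lt_of_lt_of_le hc0 hc
  have hγ' : γc * lcmin = lcmax := by
    rw [hγ]; field_simp
  subst hΔ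
  constructor
  · rintro ⟨k, hk0, hkL, hkU⟩
    have hU : 0 < (1 - a + lpmin) / lcmax := lt_of_le_of_lt hk0 hkU
    have h1 : 0 < 1 - a + lpmin := by
      have := mul_pos hU hc0'
      rwa [div_mul_cancel₀ _ (ne_of_gt hc0')] at this
    have hLU : (-1 - a + lpmax) / lcmin < (1 - a + lpmin) / lcmax := hkL.trans hkU
    rw [div_lt_div_iff₀ hc0 hc0'] at hLU
    refine ⟨by linarith, ?_⟩
    have hγpos : 0 < γc := by nlinarith
    nlinarith [mul_pos hc0 hc0']
  · rintro ⟨h1, h2⟩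
    have h1' : 0 < 1 - a + lpmin := by linarith
    have hU : 0 < (1 - a + lpmin) / lcmax := div_pos h1' hc0'
    have hLU : (-1 - a + lpmax) / lcmin < (1 - a + lpmin) / lcmax := by
      rw [div_lt_div_iff₀ hc0 hc0']
      nlinarith [mul_lt_mul_of_pos_right h2 hc0]
    have hm : max 0 ((-1 - a + lpmax) / lcmin) < (1 - a + lpmin) / lcmax :=
      max_lt hU hLU
    refine ⟨(max 0 ((-1 - a + lpmax) / lcmin) + (1 - a + lpmin) / lcmax) / 2, ?_, ?_, ?_⟩
    · have := le_max_left 0 ((-1 - a + lpmax) / lcmin)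
      linarith
    · have := le_max_right 0 ((-1 - a + lpmax) / lcmin)
      linarith
    · linarith
end

section
/- Let a ∈ ℝ and let λpmin ≤ λpmax and 0 < λcmin ≤ λcmax be reals. Set γc = λcmax/λcmin and Δp = λpmax − λpmin. Then the set {k ∈ ℝ : k < 0 and (−1 − a + λpmax)/λcmax < k < (1 − a + λpmin)/λcmin} is nonempty if and only if λpmax < 1 + a and (γc − 1)(−1 − a + λpmax) > γc(Δp − 2). -/
theorem stmt_15 (a lpmin lpmax lcmin lcmax : ℝ)
    (hp : lpmin ≤ lpmax) (hc0 : 0 < lcmin) (hc : lcmin ≤ lcmax)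
    (γc Δp : ℝ) (hγ : γc = lcmax / lcmin) (hΔ : Δp = lpmax - lpmin) :
    {k : ℝ | k < 0 ∧ (-1 - a + lpmax) / lcmax < k ∧ k < (1 - a + lpmin) / lcmin}.Nonempty ↔
      (lpmax < 1 + a ∧ (γc - 1) * (-1 - a + lpmax) > γc * (Δp - 2)) := by
  subst hγ hΔ
  have hcmax : (0:ℝ) < lcmax := lt_of_lt_of_le hc0 hc
  have hid : (lcmax / lcmin - 1) * (-1 - a + lpmax) - lcmax / lcmin * (lpmax - lpmin - 2)
      = lcmax / lcmin * (1 - a + lpmin) - (-1 - a + lpmax) := by ring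
  constructor
  · rintro ⟨k, hk0, hk1, hk2⟩
    constructor
    · have h1 : (-1 - a + lpmax) / lcmax < 0 := hk1.trans hk0
      have hA : -1 - a + lpmax < 0 := by
        by_contra h; push_neg at h
        exact absurd h1 (not_lt.2 (div_nonneg h hcmax.le))
      linarith
    · have h := hk1.trans hk2
      rw [div_lt_div_iff₀ hcmax hc0] at h
      have key : lcmax / lcmin * (1 - a + lpmin) > -1 - a + lpmax := by
        rw [gt_iff_lt, div_mul_eq_mul_div, lt_div_iff₀ hc0]
        nlinarith
      linarith
  · rintro ⟨h1, h2⟩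
    have hA : -1 - a + lpmax < 0 := by linarith
    have key : lcmax / lcmin * (1 - a + lpmin) > -1 - a + lpmax := by linarith
    have hlt : (-1 - a + lpmax) / lcmax < (1 - a + lpmin) / lcmin := by
      rw [div_lt_div_iff₀ hcmax hc0]
      have := (div_mul_eq_mul_div lcmax lcmin (1 - a + lpmin)) ▸ key
      rw [gt_iff_lt, lt_div_iff₀ hc0] at this
      nlinarith
    have hA0 : (-1 - a + lpmax) / lcmax < 0 := div_neg_of_neg_of_pos hA hcmax
    set m := min 0 ((1 - a + lpmin) / lcmin) with hm
    have hAm : (-1 - a + lpmax) / lcmax < m := lt_min hA0 hlt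
    refine ⟨((-1 - a + lpmax) / lcmax + m) / 2, ?_, ?_, ?_⟩
    · have : m ≤ 0 := min_le_left _ _
      linarith
    · linarith
    · have : m ≤ (1 - a + lpmin) / lcmin := min_le_right _ _
      linarith
end
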